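/- Let Ω ⊂ ℝⁿ be any domain, E₂ the dual of the orthogonal projection E₂* of W^{-1,2}(Ω)^n onto G^{-1,2}(Ω)^n. Then E₂(∇φ) = ∇φ for every φ ∈ C_c^∞(Ω). -/

import Mathlib

open MeasureTheory Filter
open scoped Topology BigOperators RealInnerProductSpace ENNReal

noncomputable section

abbrev Euc (n : ℕ) := EuclideanSpace ℝ (Fin n)

/-- Smooth compactly supported vector field with support in `Ω`. -/
def IsTestField {n : ℕ} (Ω : Set (Euc n)) (ψ : Euc n → Euc n) : Prop :=
  ContDiff ℝ (⊤ : ℕ∞) ψ ∧ HasCompactSupport ψ ∧ tsupport ψ ⊆ Ω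

/-- Smooth compactly supported scalar function with support in `Ω`. -/
def IsTestFun {n : ℕ} (Ω : Set (Euc n)) (φ : Euc n → ℝ) : Prop :=
  ContDiff ℝ (⊤ : ℕ∞) φ ∧ HasCompactSupport φ ∧ tsupport φ ⊆ Ω

/-- Divergence of a vector field. -/
def divg {n : ℕ} (ψ : Euc n → Euc n) (x : Euc n) : ℝ :=
  ∑ i : Fin n, fderiv ℝ ψ x (EuclideanSpace.single i 1) i

/-- The `W^{1,r}` Sobolev norm (of a smooth compactly supported field). -/
def sobNorm {n : ℕ} (r : ℝ) (ψ : Euc n → Euc n) : ℝ :=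
  (eLpNorm ψ (ENNReal.ofReal r) volume).toReal +
    (eLpNorm (fun x => ‖fderiv ℝ ψ x‖) (ENNReal.ofReal r) volume).toReal

/-- `p ∈ L^q_loc(Ω)`. -/
def LqLoc {n : ℕ} (Ω : Set (Euc n)) (q : ℝ) (p : Euc n → ℝ) : Prop :=
  ∀ K : Set (Euc n), IsCompact K → K ⊆ Ω →
    MemLp p (ENNReal.ofReal q) (volume.restrict K)

/-- A linear functional bounded with respect to the `W^{1,r}_0` norm,
i.e. an element of `W^{-1,r'}(Ω)ⁿ`. -/
def BddFunc {n : ℕ} (Ω : Set (Euc n)) (r : ℝ) (u : (Euc n → Euc n) →ₗ[ℝ] ℝ) : Prop :=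
  ∃ c : ℝ, 0 ≤ c ∧ ∀ v : Euc n → Euc n, |u v| ≤ c * sobNorm r v

/-- Membership in `W^{1,r}_{0,div}(Ω)ⁿ`: approximable by divergence free test
fields in the `W^{1,r}` norm. -/
def InDivClosure {n : ℕ} (Ω : Set (Euc n)) (r : ℝ) (v : Euc n → Euc n) : Prop :=
  ∃ g : ℕ → Euc n → Euc n,
    (∀ k, IsTestField Ω (g k) ∧ ∀ x, divg (g k) x = 0) ∧
    Tendsto (fun k => sobNorm r (fun x => v x - g k x)) atTop (𝓝 0)

/-- The `W^{1,2}` scalar product of two vector fields. -/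
def innerW {n : ℕ} (ψ χ : Euc n → Euc n) : ℝ :=
  ∫ x, (⟪ψ x, χ x⟫ +
    ∑ i : Fin n, ⟪fderiv ℝ ψ x (EuclideanSpace.single i 1),
        fderiv ℝ χ x (EuclideanSpace.single i 1)⟫)

/-- The bilinear form `∫ ∇ψ : ∇χ + δ ψ·χ` of the Stokes-like system. -/
def aForm {n : ℕ} (δ : ℝ) (ψ χ : Euc n → Euc n) : ℝ :=
  ∫ x, ((∑ i : Fin n, ⟪fderiv ℝ ψ x (EuclideanSpace.single i 1),
      fderiv ℝ χ x (EuclideanSpace.single i 1)⟫) + δ * ⟪ψ x, χ x⟫)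

/-- `∇_q`-regularity of `Ω`, witnessed by the map `T` (the restriction of the
canonical projection `E₂` to test fields): `ψ - Tψ` belongs to
`W^{1,q'}_{0,div} ∩ W^{1,2}_{0,div}`, `Tψ` is `W^{1,2}`-orthogonal to the
divergence free fields, and every functional in `W^{-1,q}(Ω)ⁿ` has a projected
pressure potential. -/
def NablaRegularT {n : ℕ} (Ω : Set (Euc n)) (q q' : ℝ)
    (T : (Euc n → Euc n) →ₗ[ℝ] (Euc n → Euc n)) : Prop :=
  (∀ ψ, IsTestField Ω ψ →
      InDivClosure Ω q' (fun x => ψ x - T ψ x) ∧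
      InDivClosure Ω 2 (fun x => ψ x - T ψ x) ∧
      ∀ g, IsTestField Ω g → (∀ x, divg g x = 0) → innerW (T ψ) g = 0) ∧
  (∀ u : (Euc n → Euc n) →ₗ[ℝ] ℝ, BddFunc Ω q' u →
      ∃ p : Euc n → ℝ, LqLoc Ω q p ∧
        ∀ ψ, IsTestField Ω ψ → u (T ψ) = -∫ x in Ω, p x * divg ψ x)

/-- Dual norm of a functional, `‖u‖_{W^{-1,q}(Ω)}`. -/
def dNorm {n : ℕ} (Ω : Set (Euc n)) (r : ℝ) (u : (Euc n → Euc n) →ₗ[ℝ] ℝ) : ℝ :=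
  sSup {t : ℝ | ∃ ψ, IsTestField Ω ψ ∧ sobNorm r ψ ≤ 1 ∧ t = |u ψ|}

/-- `p` is a `W^{-1,q}`-potential on `Ω`. -/
def IsPotential {n : ℕ} (Ω : Set (Euc n)) (q q' : ℝ) (p : Euc n → ℝ) : Prop :=
  LqLoc Ω q p ∧ ∃ c : ℝ, ∀ ψ, IsTestField Ω ψ →
    |∫ x in Ω, p x * divg ψ x| ≤ c * sobNorm q' ψ

/-- `‖∇_q p‖_{W^{-1,q}(Ω)}`. -/
def pDualNorm {n : ℕ} (Ω : Set (Euc n)) (r : ℝ) (p : Euc n → ℝ) : ℝ :=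
  sSup {t : ℝ | ∃ ψ, IsTestField Ω ψ ∧ sobNorm r ψ ≤ 1 ∧
    t = |∫ x in Ω, p x * divg ψ x|}

/-- A `q`-suitable subdomain of `Ω`. -/
def IsSuitable {n : ℕ} (Ω : Set (Euc n)) (q q' : ℝ) (U : Set (Euc n)) : Prop :=
  U ⊆ Ω ∧ IsOpen U ∧ U.Nonempty ∧ IsConnected U ∧
    ∀ p, IsPotential Ω q q' p → MemLp p (ENNReal.ofReal q) (volume.restrict U)

/-- Laplacian. -/
def lapl {n : ℕ} (h : Euc n → ℝ) (x : Euc n) : ℝ :=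
  ∑ i : Fin n, iteratedFDeriv ℝ 2 h x
    ![EuclideanSpace.single i 1, EuclideanSpace.single i 1]

/-- `q`-weak solution of the Stokes(-like) system with data `ustar`. -/
def IsWeakSol {n : ℕ} (Ω : Set (Euc n)) (q δ : ℝ)
    (ustar : (Euc n → Euc n) →ₗ[ℝ] ℝ) (u : Euc n → Euc n) : Prop :=
  ∃ g : ℕ → Euc n → Euc n,
    (∀ k, IsTestField Ω (g k) ∧ ∀ x, divg (g k) x = 0) ∧
    Tendsto (fun k => sobNorm q (fun x => u x - g k x)) atTop (𝓝 0) ∧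
    ∀ v, IsTestField Ω v → (∀ x, divg v x = 0) →
      Tendsto (fun k => aForm δ (g k) v) atTop (𝓝 (ustar v))

/-- A bounded `C¹` domain (locally a sublevel set of a `C¹` submersion). -/
def IsC1Domain {n : ℕ} (Ω : Set (Euc n)) : Prop :=
  IsOpen Ω ∧ ∀ x ∈ frontier Ω, ∃ (U : Set (Euc n)) (f : Euc n → ℝ),
    x ∈ U ∧ IsOpen U ∧ ContDiff ℝ 1 f ∧ (∀ y ∈ U, fderiv ℝ f y ≠ 0) ∧
    Ω ∩ U = {y ∈ U | f y < 0}



namespace S7Aux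

variable {n : ℕ}

lemma contDiff_dcoord {f : Euc n → ℝ} (hf : ContDiff ℝ (⊤ : ℕ∞) f) (v : Euc n) :
    ContDiff ℝ (⊤ : ℕ∞) (fun x => fderiv ℝ f x v) :=
  (ContinuousLinearMap.apply ℝ ℝ v).contDiff.comp (hf.fderiv_right (by simp))

lemma ibp {f g : Euc n → ℝ} (hf : ContDiff ℝ (⊤ : ℕ∞) f) (hg : ContDiff ℝ (⊤ : ℕ∞) g)
    (hgs : HasCompactSupport g) (v : Euc n) :
    ∫ x, f x * fderiv ℝ g x v = - ∫ x, fderiv ℝ f x v * g x := by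
  apply integral_mul_fderiv_eq_neg_fderiv_mul_of_integrable
  · exact ((contDiff_dcoord hf v).continuous.mul hg.continuous).integrable_of_hasCompactSupport
      hgs.mul_left
  · exact (hf.continuous.mul (contDiff_dcoord hg v).continuous).integrable_of_hasCompactSupport
      ((hgs.fderiv_apply (𝕜 := ℝ) v).mul_left)
  · exact (hf.continuous.mul hg.continuous).integrable_of_hasCompactSupport hgs.mul_left
  · exact fun x _ => hf.differentiable (by simp) x
  · exact fun x _ => hg.differentiable (by simp) x

lemma fderiv_coord {f : Euc n → Euc n} {x : Euc n} (hf : DifferentiableAt ℝ f x)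
    (v : Euc n) (j : Fin n) :
    fderiv ℝ (fun y => f y j) x v = fderiv ℝ f x v j := by
  have h : (fun y => f y j) = (EuclideanSpace.proj j : Euc n →L[ℝ] ℝ) ∘ f := rfl
  rw [h, fderiv_comp x (EuclideanSpace.proj j).differentiableAt hf,
    ContinuousLinearMap.fderiv]
  rfl

lemma fderiv_swap {f : Euc n → ℝ} (hf : ContDiff ℝ (⊤ : ℕ∞) f) (x v w : Euc n) :
    fderiv ℝ (fun y => fderiv ℝ f y v) x w = fderiv ℝ (fun y => fderiv ℝ f y w) x v := by
  have hsymm : IsSymmSndFDerivAt ℝ f x := (hf.contDiffAt).isSymmSndFDerivAt (by rw [minSmoothness_of_isRCLikeNormedField]; exact WithTop.coe_le_coe.2 le_top)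
  have hd : DifferentiableAt ℝ (fderiv ℝ f) x :=
    ((hf.fderiv_right (m := 1) (by exact WithTop.coe_le_coe.2 le_top)).differentiable one_ne_zero) x
  have h1 : ∀ u : Euc n, fderiv ℝ (fun y => fderiv ℝ f y u) x
      = (fderiv ℝ (fderiv ℝ f) x).flip u := by
    intro u
    have := fderiv_clm_apply (𝕜 := ℝ) hd (differentiableAt_const u)
    simpa using this
  rw [h1 v, h1 w]
  exact hsymm w v

lemma integ_cc {f g : Euc n → ℝ} (hf : Continuous f) (hg : Continuous g)
    (h : HasCompactSupport g) : Integrable (fun x => f x * g x) volume :=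
  (hf.mul hg).integrable_of_hasCompactSupport h.mul_left

lemma grad_coord {φ : Euc n → ℝ} (x : Euc n) (j : Fin n) :
    gradient φ x j = fderiv ℝ φ x (EuclideanSpace.single j 1) := by
  have h1 : gradient φ x j = ⟪gradient φ x, EuclideanSpace.single j (1:ℝ)⟫ := by
    rw [EuclideanSpace.inner_single_right]; simp
  rw [h1]
  exact InnerProductSpace.toDual_symm_apply

lemma grad_smooth {φ : Euc n → ℝ} (hφ : ContDiff ℝ (⊤ : ℕ∞) φ) :
    ContDiff ℝ (⊤ : ℕ∞) (fun x => gradient φ x) :=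
  (InnerProductSpace.toDual ℝ (Euc n)).symm.contDiff.comp (hφ.fderiv_right (by simp))

lemma grad_support {φ : Euc n → ℝ} :
    Function.support (fun x => gradient φ x) ⊆ tsupport φ := by
  intro x hx
  by_contra hxn
  apply hx
  have h0 : fderiv ℝ φ x = 0 := by
    by_contra h
    exact hxn (support_fderiv_subset ℝ (f := φ) (Function.mem_support.2 h))
  show gradient φ x = 0
  show (InnerProductSpace.toDual ℝ (Euc n)).symm (fderiv ℝ φ x) = 0
  rw [h0, map_zero]

lemma grad_hcs {φ : Euc n → ℝ} (hφ : HasCompactSupport φ) :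
    HasCompactSupport (fun x => gradient φ x) :=
  hφ.mono' grad_support

lemma innerW_grad {φ : Euc n → ℝ} {ψ : Euc n → Euc n}
    (hφs : ContDiff ℝ (⊤ : ℕ∞) φ) (hφc : HasCompactSupport φ)
    (hψs : ContDiff ℝ (⊤ : ℕ∞) ψ) (hψc : HasCompactSupport ψ)
    (hdiv : ∀ x, divg ψ x = 0) :
    innerW (fun x => gradient φ x) ψ = 0 := by
  classical
  set e : Fin n → Euc n := fun i => EuclideanSpace.single i 1 with he
  -- coordinate functions
  set p : Fin n → Euc n → ℝ := fun j x => fderiv ℝ φ x (e j) with hp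
  set c : Fin n → Euc n → ℝ := fun j x => ψ x j with hc
  have hps : ∀ j, ContDiff ℝ (⊤ : ℕ∞) (p j) := fun j => contDiff_dcoord hφs (e j)
  have hpc : ∀ j, HasCompactSupport (p j) := fun j => hφc.fderiv_apply (𝕜 := ℝ) (e j)
  have hcs : ∀ j, ContDiff ℝ (⊤ : ℕ∞) (c j) :=
    fun j => (EuclideanSpace.proj j : Euc n →L[ℝ] ℝ).contDiff.comp hψs
  have hcc : ∀ j, HasCompactSupport (c j) :=
    fun j => hψc.comp_left (g := fun z : Euc n => z j) rfl
  -- the integrand, rewritten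
  have hG : ∀ x, (⟪gradient φ x, ψ x⟫ +
      ∑ i : Fin n, ⟪fderiv ℝ (fun y => gradient φ y) x (e i), fderiv ℝ ψ x (e i)⟫)
      = (∑ j : Fin n, p j x * c j x) +
        ∑ i : Fin n, ∑ j : Fin n,
          (fun y => fderiv ℝ (p j) y (e i)) x * (fun y => fderiv ℝ (c j) y (e i)) x := by
    intro x
    congr 1
    · rw [PiLp.inner_apply]
      refine Finset.sum_congr rfl fun j _ => ?_
      simp [hp, hc, grad_coord, RCLike.inner_apply, starRingEnd_apply]
      exact mul_comm _ _
    · refine Finset.sum_congr rfl fun i _ => ?_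
      rw [PiLp.inner_apply]
      refine Finset.sum_congr rfl fun j _ => ?_
      have h1 : fderiv ℝ (fun y => gradient φ y) x (e i) j
          = fderiv ℝ (p j) x (e i) := by
        rw [← fderiv_coord ((grad_smooth hφs).differentiable (by simp) x) (e i) j]
        have hfun : (fun y => gradient φ y j) = p j := funext fun y => grad_coord y j
        rw [hfun]
      have h2 : fderiv ℝ ψ x (e i) j = fderiv ℝ (c j) x (e i) :=
        (fderiv_coord (hψs.differentiable (by simp) x) (e i) j).symm
      simp [RCLike.inner_apply, starRingEnd_apply, h1, h2]
      exact mul_comm _ _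
  -- integrability
  have hint1 : ∀ j : Fin n, Integrable (fun x => p j x * c j x) volume :=
    fun j => integ_cc (hps j).continuous (hcs j).continuous (hcc j)
  have hint2 : ∀ i j : Fin n, Integrable
      (fun x => fderiv ℝ (p j) x (e i) * fderiv ℝ (c j) x (e i)) volume :=
    fun i j => integ_cc (contDiff_dcoord (hps j) (e i)).continuous
      (contDiff_dcoord (hcs j) (e i)).continuous ((hcc j).fderiv_apply (𝕜 := ℝ) (e i))
  have hintA : Integrable (fun x => ∑ j : Fin n, p j x * c j x) volume :=
    integrable_finset_sum _ (fun j _ => hint1 j)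
  have hintB : Integrable (fun x => ∑ i : Fin n, ∑ j : Fin n,
      fderiv ℝ (p j) x (e i) * fderiv ℝ (c j) x (e i)) volume :=
    integrable_finset_sum _ (fun i _ => integrable_finset_sum _ (fun j _ => hint2 i j))
  -- split the integral
  have hsplit : innerW (fun x => gradient φ x) ψ
      = (∑ j : Fin n, ∫ x, p j x * c j x)
        + ∑ i : Fin n, ∑ j : Fin n,
            ∫ x, fderiv ℝ (p j) x (e i) * fderiv ℝ (c j) x (e i) := by
    have h0 : innerW (fun x => gradient φ x) ψ
        = ∫ x, ((∑ j : Fin n, p j x * c j x)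
          + ∑ i : Fin n, ∑ j : Fin n,
              fderiv ℝ (p j) x (e i) * fderiv ℝ (c j) x (e i)) := by
      unfold innerW
      exact integral_congr_ae (Filter.Eventually.of_forall hG)
    rw [h0, integral_add hintA hintB]
    congr 1
    · exact integral_finset_sum _ (fun j _ => hint1 j)
    · rw [integral_finset_sum _ (fun i _ => integrable_finset_sum _ (fun j _ => hint2 i j))]
      exact Finset.sum_congr rfl fun i _ => integral_finset_sum _ (fun j _ => hint2 i j)
  -- pointwise divergence sums
  have hdivc : ∀ x, (∑ j : Fin n, fderiv ℝ (c j) x (e j)) = 0 := by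
    intro x
    have h : ∀ j : Fin n, fderiv ℝ (c j) x (e j) = fderiv ℝ ψ x (e j) j :=
      fun j => fderiv_coord (hψs.differentiable (by simp) x) (e j) j
    rw [Finset.sum_congr rfl fun j _ => h j]
    exact hdiv x
  have hzero : ∀ (u : Fin n → ℝ) (a : ℝ), (∑ j : Fin n, u j) = 0 →
      (∑ j : Fin n, -(u j * a)) = 0 := by
    intro u a h
    simp only [← neg_mul]
    rw [← Finset.sum_mul]
    simp [h]
  -- first sum vanishes
  have hsum1 : (∑ j : Fin n, ∫ x, p j x * c j x) = 0 := by
    have h1 : ∀ j : Fin n, ∫ x, p j x * c j x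
        = ∫ x, -(fderiv ℝ (c j) x (e j) * φ x) := by
      intro j
      have hibp := ibp (hcs j) hφs hφc (e j)
      have hl : ∫ x, p j x * c j x = ∫ x, c j x * fderiv ℝ φ x (e j) := by
        simp_rw [mul_comm]
        rfl
      rw [hl, hibp, ← integral_neg]
    rw [Finset.sum_congr rfl fun j _ => h1 j,
      show (∑ j : Fin n, ∫ x, -(fderiv ℝ (c j) x (e j) * φ x))
          = ∫ x, ∑ j : Fin n, -(fderiv ℝ (c j) x (e j) * φ x) from
        (integral_finset_sum _ (fun j _ => (integ_cc
          (contDiff_dcoord (hcs j) (e j)).continuous hφs.continuous hφc).neg)).symm]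
    have : ∀ x, (∑ j : Fin n, -(fderiv ℝ (c j) x (e j) * φ x)) = 0 :=
      fun x => hzero _ _ (hdivc x)
    simp [this]
  -- second sum vanishes
  have hsum2 : (∑ i : Fin n, ∑ j : Fin n,
      ∫ x, fderiv ℝ (p j) x (e i) * fderiv ℝ (c j) x (e i)) = 0 := by
    have h2 : ∀ i j : Fin n, ∫ x, fderiv ℝ (p j) x (e i) * fderiv ℝ (c j) x (e i)
        = ∫ x, -(fderiv ℝ (fun y => fderiv ℝ (c j) y (e j)) x (e i) * p i x) := by
      intro i j
      have hl : ∫ x, fderiv ℝ (p j) x (e i) * fderiv ℝ (c j) x (e i)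
          = ∫ x, (fun y => fderiv ℝ (c j) y (e i)) x * fderiv ℝ (p i) x (e j) := by
        congr 1
        funext x
        rw [show fderiv ℝ (p j) x (e i) = fderiv ℝ (p i) x (e j) from
          fderiv_swap hφs x (e j) (e i), mul_comm]
      rw [hl, ibp (contDiff_dcoord (hcs j) (e i)) (hps i) (hpc i) (e j), ← integral_neg]
      congr 1
      funext x
      rw [fderiv_swap (hcs j) x (e i) (e j)]
    rw [Finset.sum_congr rfl fun i _ => Finset.sum_congr rfl fun j _ => h2 i j]
    have h3 : ∀ i : Fin n,
        (∑ j : Fin n, ∫ x, -(fderiv ℝ (fun y => fderiv ℝ (c j) y (e j)) x (e i) * p i x)) = 0 := by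
      intro i
      rw [show (∑ j : Fin n,
            ∫ x, -(fderiv ℝ (fun y => fderiv ℝ (c j) y (e j)) x (e i) * p i x))
          = ∫ x, ∑ j : Fin n,
              -(fderiv ℝ (fun y => fderiv ℝ (c j) y (e j)) x (e i) * p i x) from
        (integral_finset_sum _ (fun j _ => (integ_cc
          (contDiff_dcoord (contDiff_dcoord (hcs j) (e j)) (e i)).continuous
          (hps i).continuous (hpc i)).neg)).symm]
      have hpt : ∀ x, (∑ j : Fin n,
          -(fderiv ℝ (fun y => fderiv ℝ (c j) y (e j)) x (e i) * p i x)) = 0 := by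
        intro x
        refine hzero _ _ ?_
        have hdf : ∀ j ∈ (Finset.univ : Finset (Fin n)),
            DifferentiableAt ℝ (fun y => fderiv ℝ (c j) y (e j)) x :=
          fun j _ => ((contDiff_dcoord (hcs j) (e j)).differentiable (by simp)) x
        have hs := fderiv_fun_sum (𝕜 := ℝ) (x := x) hdf
        have : (∑ j : Fin n, fderiv ℝ (fun y => fderiv ℝ (c j) y (e j)) x) =
            fderiv ℝ (fun y => ∑ j : Fin n, fderiv ℝ (c j) y (e j)) x := hs.symm
        calc (∑ j : Fin n, fderiv ℝ (fun y => fderiv ℝ (c j) y (e j)) x (e i))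
            = (∑ j : Fin n, fderiv ℝ (fun y => fderiv ℝ (c j) y (e j)) x) (e i) := by
              rw [ContinuousLinearMap.sum_apply]
          _ = fderiv ℝ (fun y => ∑ j : Fin n, fderiv ℝ (c j) y (e j)) x (e i) := by rw [this]
          _ = 0 := by
              rw [show (fun y => ∑ j : Fin n, fderiv ℝ (c j) y (e j)) = fun _ => (0:ℝ) from
                funext fun y => hdivc y, fderiv_const_apply]
              rfl
      simp [hpt]
    simp [Finset.sum_congr rfl fun i (_ : i ∈ Finset.univ) => h3 i]
  rw [hsplit, hsum1, hsum2, add_zero]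

end S7Aux


/-- for any domain `Ω`, with `E₂` the dual of the orthogonal
projection `E₂*` of `W^{-1,2}(Ω)ⁿ` onto `G^{-1,2}(Ω)ⁿ` (the annihilator of the
divergence free fields), one has `E₂(∇φ) = ∇φ` for all `φ ∈ C_c^∞(Ω)`.
The space `W^{1,2}_0(Ω)ⁿ` is realized as a Hilbert space `X` in which the
test fields embed densely compatibly with the `W^{1,2}` scalar product. -/
theorem statement_7 {n : ℕ} (Ω : Set (Euc n)) (hΩ : IsOpen Ω)
    (X : Type) [NormedAddCommGroup X] [InnerProductSpace ℝ X] [CompleteSpace X]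
    (ι : (Euc n → Euc n) →ₗ[ℝ] X)
    (hinner : ∀ ψ χ, IsTestField Ω ψ → IsTestField Ω χ → ⟪ι ψ, ι χ⟫ = innerW ψ χ)
    (hdense : Dense ((Submodule.span ℝ (ι '' {ψ | IsTestField Ω ψ}) :
        Submodule ℝ X) : Set X))
    (Estar : (X →L[ℝ] ℝ) →L[ℝ] (X →L[ℝ] ℝ))
    (hrange : ∀ (w : X →L[ℝ] ℝ),
      ∀ v ∈ closure (ι '' {ψ | IsTestField Ω ψ ∧ ∀ x, divg ψ x = 0}), Estar w v = 0)
    (hfix : ∀ w : X →L[ℝ] ℝ,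
      (∀ v ∈ closure (ι '' {ψ | IsTestField Ω ψ ∧ ∀ x, divg ψ x = 0}), w v = 0) →
      Estar w = w)
    (hself : ∀ a b : X →L[ℝ] ℝ,
      (Estar a) ((InnerProductSpace.toDual ℝ X).symm b) =
        a ((InnerProductSpace.toDual ℝ X).symm (Estar b)))
    (E : X →L[ℝ] X)
    (hdual : ∀ (w : X →L[ℝ] ℝ) (u : X), Estar w u = w (E u)) :
    ∀ φ : Euc n → ℝ, IsTestFun Ω φ →
      E (ι (fun x => gradient φ x)) = ι (fun x => gradient φ x) := by
  intro φ hφ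
  obtain ⟨hφs, hφc, hφΩ⟩ := hφ
  have hGtest : IsTestField Ω (fun x => gradient φ x) :=
    ⟨S7Aux.grad_smooth hφs, S7Aux.grad_hcs hφc,
      (closure_minimal S7Aux.grad_support (isClosed_tsupport φ)).trans hφΩ⟩
  set u : X := ι (fun x => gradient φ x) with hu
  have hb : ∀ v ∈ closure (ι '' {ψ | IsTestField Ω ψ ∧ ∀ x, divg ψ x = 0}),
      (InnerProductSpace.toDual ℝ X u) v = 0 := by
    intro v hv
    have hcl : IsClosed {v : X | (InnerProductSpace.toDual ℝ X u) v = 0} :=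
      isClosed_eq (InnerProductSpace.toDual ℝ X u).continuous continuous_const
    refine closure_minimal ?_ hcl hv
    rintro _ ⟨ψ, ⟨hψt, hψdiv⟩, rfl⟩
    show (InnerProductSpace.toDual ℝ X u) (ι ψ) = 0
    rw [InnerProductSpace.toDual_apply_apply, hinner _ ψ hGtest hψt]
    exact S7Aux.innerW_grad hφs hφc hψt.1 hψt.2.1 hψdiv
  have hfixb := hfix _ hb
  have hw : ∀ w : X →L[ℝ] ℝ, w (E u) = w u := by
    intro w
    have h2 := hself w (InnerProductSpace.toDual ℝ X u)
    rw [hfixb, LinearIsometryEquiv.symm_apply_apply] at h2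
    calc w (E u) = Estar w u := (hdual w u).symm
      _ = w u := h2
  refine ext_inner_left ℝ fun y => ?_
  simpa [InnerProductSpace.toDual_apply_apply] using hw (InnerProductSpace.toDual ℝ X y)

end
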